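/- Let q > 0 and let γ₁ < 0 < γ₂ with γ₁ + γ₂ = 1 - 2μ/σ² and γ₁γ₂ = -2q/σ², arising from linear Brownian motion, and assume q > μ. Then the equation Z^{(q)}(k) = q W^{(q)}(k), with W^{(q)}(x) = 2(e^{γ₂x} - e^{γ₁x})/(σ²(γ₂-γ₁)) and Z^{(q)}(x) = (γ₂e^{γ₁x} - γ₁e^{γ₂x})/(γ₂-γ₁), has the unique strictly positive solution k* = (1/(γ₂ - γ₁)) · log((1 - γ₁⁻¹)/(1 - γ₂⁻¹)). -/
import Mathlib

open Real

/-- For linear Brownian motion with `q > μ`, the equation `Z^{(q)}(k) = q W^{(q)}(k)` has the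
unique strictly positive solution `k* = (γ₂ - γ₁)⁻¹ log((1 - γ₁⁻¹)/(1 - γ₂⁻¹))`. -/
theorem unique_root_Z_eq_qW
    (μ σ q : ℝ) (hσ : 0 < σ) (hq : 0 < q) (hqμ : μ < q)
    (γ₁ γ₂ : ℝ) (hγ₁neg : γ₁ < 0) (hγ₂pos : 0 < γ₂)
    (hroot₁ : σ ^ 2 / 2 * γ₁ ^ 2 + (μ - σ ^ 2 / 2) * γ₁ - q = 0)
    (hroot₂ : σ ^ 2 / 2 * γ₂ ^ 2 + (μ - σ ^ 2 / 2) * γ₂ - q = 0)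
    (W Z : ℝ → ℝ)
    (hW : ∀ x : ℝ, W x = 2 * (Real.exp (γ₂ * x) - Real.exp (γ₁ * x)) / (σ ^ 2 * (γ₂ - γ₁)))
    (hZ : ∀ x : ℝ, Z x = (γ₂ * Real.exp (γ₁ * x) - γ₁ * Real.exp (γ₂ * x)) / (γ₂ - γ₁))
    (kstar : ℝ)
    (hk : kstar = 1 / (γ₂ - γ₁) * Real.log ((1 - γ₁⁻¹) / (1 - γ₂⁻¹))) :
    0 < kstar ∧ Z kstar = q * W kstar ∧
      ∀ k : ℝ, 0 < k → Z k = q * W k → k = kstar := by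
  have hσ2 : (0:ℝ) < σ ^ 2 := by positivity
  have hS : 0 < γ₂ - γ₁ := by linarith
  have hSne : γ₂ - γ₁ ≠ 0 := ne_of_gt hS
  have hd : γ₁ - γ₂ ≠ 0 := sub_ne_zero.mpr (by linarith)
  have hfac : (σ ^ 2 / 2 * (γ₁ + γ₂) + (μ - σ ^ 2 / 2)) * (γ₁ - γ₂) = 0 := by
    linear_combination hroot₁ - hroot₂
  have hsum : σ ^ 2 / 2 * (γ₁ + γ₂) + (μ - σ ^ 2 / 2) = 0 := by
    rcases mul_eq_zero.mp hfac with h | h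
    · exact h
    · exact absurd h hd
  have hprod : σ ^ 2 / 2 * (γ₁ * γ₂) + q = 0 := by
    linear_combination γ₁ * hsum - hroot₁
  have hqval : q = -(σ ^ 2 / 2) * (γ₁ * γ₂) := by linarith
  have hfac2 : σ ^ 2 / 2 * (1 - γ₁) * (1 - γ₂) = μ - q := by
    linear_combination hprod - hsum
  have h1γ₁ : 0 < 1 - γ₁ := by linarith
  have hγ₂1 : 1 < γ₂ := by
    by_contra h
    push_neg at h
    have h2 : 0 ≤ 1 - γ₂ := by linarith
    have h3 : 0 ≤ σ ^ 2 / 2 * (1 - γ₁) * (1 - γ₂) :=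
      mul_nonneg (mul_nonneg (by positivity) h1γ₁.le) h2
    linarith
  have hγ₁ne : γ₁ ≠ 0 := ne_of_lt hγ₁neg
  have hγ₂ne : γ₂ ≠ 0 := ne_of_gt hγ₂pos
  set A : ℝ := γ₂ * (1 - γ₁) with hA
  set B : ℝ := γ₁ * (1 - γ₂) with hB
  have hApos : 0 < A := by nlinarith
  have hBpos : 0 < B := by nlinarith
  have hAB : B < A := by nlinarith
  have hden : (1 - γ₂⁻¹) ≠ 0 := by
    have : γ₂⁻¹ < 1 := by
      rw [inv_lt_one_iff₀]; right; exact hγ₂1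
    linarith
  have hRval : (1 - γ₁⁻¹) / (1 - γ₂⁻¹) = A / B := by
    rw [hA, hB, div_eq_div_iff hden hBpos.ne']
    field_simp
    ring
  have key : ∀ k : ℝ, Z k = q * W k ↔ Real.exp ((γ₂ - γ₁) * k) = A / B := by
    intro k
    have he1 : 0 < Real.exp (γ₁ * k) := Real.exp_pos _
    have he2 : 0 < Real.exp (γ₂ * k) := Real.exp_pos _
    have hdiff : Z k - q * W k =
        (A * Real.exp (γ₁ * k) - B * Real.exp (γ₂ * k)) / (γ₂ - γ₁) := by
      rw [hZ, hW, hqval, hA, hB]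
      field_simp
      ring
    have hexp : Real.exp ((γ₂ - γ₁) * k) = Real.exp (γ₂ * k) / Real.exp (γ₁ * k) := by
      rw [← Real.exp_sub]; ring_nf
    have h0iff : Z k = q * W k ↔ A * Real.exp (γ₁ * k) - B * Real.exp (γ₂ * k) = 0 := by
      rw [← sub_eq_zero, hdiff, div_eq_zero_iff]
      simp [hSne]
    rw [h0iff, hexp, div_eq_div_iff he1.ne' hBpos.ne']
    constructor
    · intro h; linear_combination -h
    · intro h; linear_combination -h
  have hRpos : (0:ℝ) < A / B := div_pos hApos hBpos
  have hR1 : 1 < A / B := (one_lt_div hBpos).mpr hAB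
  have hkeq : (γ₂ - γ₁) * kstar = Real.log (A / B) := by
    rw [hk, hRval]
    field_simp
  have hexpk : Real.exp ((γ₂ - γ₁) * kstar) = A / B := by
    rw [hkeq, Real.exp_log hRpos]
  have hkpos : 0 < kstar := by
    have hlog : 0 < Real.log (A / B) := Real.log_pos hR1
    rw [hk, hRval]
    positivity
  refine ⟨hkpos, (key kstar).mpr hexpk, ?_⟩
  intro k hk0 hkeq'
  have h1 : Real.exp ((γ₂ - γ₁) * k) = Real.exp ((γ₂ - γ₁) * kstar) := by
    rw [(key k).mp hkeq', hexpk]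
  exact mul_left_cancel₀ hSne (Real.exp_injective h1)
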